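/- arXiv:2605.21727 — 9 statements merged into one kernel-verified Lean document; each statement's English description precedes it below -/
import Mathlib

section
/- Let 1 ≤ s ≤ m. For every choice of s distinct coordinate positions in {0,1,…,2^m−1} and every assignment of values in 𝔽₂ to these positions, there exists a mask in M(s,m) taking exactly these values at these positions; i.e., the recursively constructed set M(s,m) covers any s stuck-at errors in a binary sequence of length 2^m. -/
/-- The recursively constructed mask set `M(s, m)`, viewed as a set of vectors of
length `2^m` indexed by the points of `𝔽₂^m` (i.e. functions `(Fin m → ZMod 2) → ZMod 2`).
For a point `p : Fin (m+1) → ZMod 2`, the coordinate `p 0` selects the half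
(left half for `p 0 = 0`) and `Fin.tail p` the position inside that half, so that
the concatenation `[x, y]` corresponds to
`fun p => if p 0 = 0 then x (Fin.tail p) else y (Fin.tail p)`. -/
def maskSet : (m : ℕ) → ℕ → Set ((Fin m → ZMod 2) → ZMod 2)
  | 0, _ => Set.univ
  | m + 1, s =>
    if s ≤ 1 then {fun _ => 0, fun _ => 1}
    else if m + 1 ≤ Nat.clog 2 s then Set.univ
    else
      ((fun g : (Fin m → ZMod 2) → ZMod 2 => fun p => g (Fin.tail p)) '' maskSet m s) ∪
        ⋃ i ∈ Finset.Ico 1 s,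
          {f | ∃ x ∈ maskSet m i, ∃ y ∈ maskSet m (s - i),
            f = fun p => if p 0 = 0 then x (Fin.tail p) else y (Fin.tail p)}

lemma zmod2_cases (x : ZMod 2) : x = 0 ∨ x = 1 := by revert x; decide

lemma tail_inj {m : ℕ} {p q : Fin (m + 1) → ZMod 2} (h0 : p 0 = q 0)
    (ht : Fin.tail p = Fin.tail q) : p = q := by
  funext i
  refine Fin.cases ?_ ?_ i
  · exact h0
  · exact fun j => congrFun ht j

lemma cons_zmod_eq {m : ℕ} (p : Fin (m + 1) → ZMod 2) (c : ZMod 2) (hc : p 0 = c) :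
    Fin.cons c (Fin.tail p) = p := by
  rw [← hc]; exact Fin.cons_self_tail p

lemma maskSet_covers_aux : ∀ m s, 1 ≤ s → s ≤ 2 ^ m →
    ∀ T : Finset (Fin m → ZMod 2), T.card = s →
    ∀ v : (Fin m → ZMod 2) → ZMod 2,
    ∃ f ∈ maskSet m s, ∀ p ∈ T, f p = v p := by
  intro m
  induction m with
  | zero =>
    intro s hs h2 T hT v
    exact ⟨v, by rw [maskSet]; trivial, fun p _ => rfl⟩
  | succ m ih =>
    intro s hs h2 T hT v
    by_cases hs1 : s ≤ 1
    · have hT1 : T.card = 1 := by omega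
      obtain ⟨p0, hp0⟩ := Finset.card_eq_one.mp hT1
      refine ⟨fun _ => v p0, ?_, ?_⟩
      · rw [maskSet]
        simp only [if_pos hs1]
        rcases zmod2_cases (v p0) with h | h
        · exact Or.inl (by funext _; rw [h])
        · exact Or.inr (by funext _; rw [h])
      · intro p hp
        rw [hp0, Finset.mem_singleton] at hp
        rw [hp]
    · by_cases hclog : m + 1 ≤ Nat.clog 2 s
      · refine ⟨v, ?_, fun p _ => rfl⟩
        rw [maskSet]
        simp only [if_neg hs1, if_pos hclog]
        trivial
      · have hs2 : 2 ≤ s := by omega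
        have hs2m : s ≤ 2 ^ m := by
          have h1 : s ≤ 2 ^ Nat.clog 2 s := Nat.le_pow_clog one_lt_two s
          have h2' : Nat.clog 2 s ≤ m := by omega
          exact h1.trans (Nat.pow_le_pow_right (by norm_num) h2')
        -- diagonal helper
        have diag : ∀ c : ZMod 2, (∀ p ∈ T, p 0 = c) →
            ∃ f ∈ maskSet (m + 1) s, ∀ p ∈ T, f p = v p := by
          intro c hc
          have hinj : Set.InjOn (fun p : Fin (m+1) → ZMod 2 => Fin.tail p) (T : Set _) := by
            intro p hp q hq h
            exact tail_inj (by rw [hc p hp, hc q hq]) h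
          have hcard : (T.image (fun p : Fin (m+1) → ZMod 2 => Fin.tail p)).card = s := by
            rw [Finset.card_image_of_injOn hinj, hT]
          obtain ⟨g, hg, hgv⟩ := ih s hs hs2m (T.image (fun p : Fin (m+1) → ZMod 2 => Fin.tail p)) hcard
            (fun q => v (Fin.cons c q))
          refine ⟨fun p => g (Fin.tail p), ?_, ?_⟩
          · rw [maskSet]
            simp only [if_neg hs1, if_neg hclog]
            exact Or.inl ⟨g, hg, rfl⟩
          · intro p hp
            have h1 := hgv (Fin.tail p) (Finset.mem_image_of_mem _ hp)
            simp only at h1 ⊢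
            rw [h1, cons_zmod_eq p c (hc p hp)]
        set T0 := T.filter (fun p => p 0 = 0) with hT0def
        set T1 := T.filter (fun p => ¬ p 0 = 0) with hT1def
        have hab : T0.card + T1.card = s := by
          rw [hT0def, hT1def, Finset.card_filter_add_card_filter_not, hT]
        by_cases ha : T0.card = 0
        · apply diag 1
          intro p hp
          have hpn : p ∉ T0 := by
            rw [Finset.card_eq_zero] at ha
            simp [ha]
          rw [hT0def, Finset.mem_filter] at hpn
          rcases zmod2_cases (p 0) with h | h
          · exact absurd ⟨hp, h⟩ hpn
          · exact h
        · by_cases hb : T1.card = 0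
          · apply diag 0
            intro p hp
            have hpn : p ∉ T1 := by
              rw [Finset.card_eq_zero] at hb
              simp [hb]
            rw [hT1def, Finset.mem_filter] at hpn
            by_contra h
            exact hpn ⟨hp, h⟩
          · -- both halves nonempty
            have hmem0 : ∀ p ∈ T0, p 0 = 0 := fun p hp => (Finset.mem_filter.mp hp).2
            have hmem1 : ∀ p ∈ T1, p 0 = 1 := by
              intro p hp
              have := (Finset.mem_filter.mp hp).2
              rcases zmod2_cases (p 0) with h | h
              · exact absurd h this
              · exact h
            have hinj0 : Set.InjOn (fun p : Fin (m+1) → ZMod 2 => Fin.tail p) (T0 : Set _) := fun p hp q hq h =>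
              tail_inj (by rw [hmem0 p hp, hmem0 q hq]) h
            have hinj1 : Set.InjOn (fun p : Fin (m+1) → ZMod 2 => Fin.tail p) (T1 : Set _) := fun p hp q hq h =>
              tail_inj (by rw [hmem1 p hp, hmem1 q hq]) h
            have hc0 : (T0.image (fun p : Fin (m+1) → ZMod 2 => Fin.tail p)).card = T0.card :=
              Finset.card_image_of_injOn hinj0
            have hc1 : (T1.image (fun p : Fin (m+1) → ZMod 2 => Fin.tail p)).card = T1.card :=
              Finset.card_image_of_injOn hinj1
            have hcard2m : Fintype.card (Fin m → ZMod 2) = 2 ^ m := by simp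
            have hle0 : T0.card ≤ 2 ^ m := by
              rw [← hc0, ← hcard2m]; exact Finset.card_le_univ _
            have hle1 : T1.card ≤ 2 ^ m := by
              rw [← hc1, ← hcard2m]; exact Finset.card_le_univ _
            obtain ⟨x, hx, hxv⟩ := ih T0.card (by omega) hle0 (T0.image (fun p : Fin (m+1) → ZMod 2 => Fin.tail p)) hc0
              (fun q => v (Fin.cons 0 q))
            obtain ⟨y, hy, hyv⟩ := ih T1.card (by omega) hle1 (T1.image (fun p : Fin (m+1) → ZMod 2 => Fin.tail p)) hc1
              (fun q => v (Fin.cons 1 q))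
            have hsub : s - T0.card = T1.card := by omega
            refine ⟨fun p => if p 0 = 0 then x (Fin.tail p) else y (Fin.tail p), ?_, ?_⟩
            · rw [maskSet]
              simp only [if_neg hs1, if_neg hclog]
              right
              refine Set.mem_biUnion (show T0.card ∈ Finset.Ico 1 s from Finset.mem_Ico.mpr ⟨by omega, by omega⟩) ?_
              exact ⟨x, hx, y, hsub ▸ hy, rfl⟩
            · intro p hp
              by_cases hp0 : p 0 = 0
              · have hpT0 : p ∈ T0 := Finset.mem_filter.mpr ⟨hp, hp0⟩
                have h1 := hxv (Fin.tail p) (Finset.mem_image_of_mem _ hpT0)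
                simp only [if_pos hp0]
                rw [h1, cons_zmod_eq p 0 hp0]
              · have hpT1 : p ∈ T1 := Finset.mem_filter.mpr ⟨hp, hp0⟩
                have h1 := hyv (Fin.tail p) (Finset.mem_image_of_mem _ hpT1)
                simp only [if_neg hp0]
                rw [h1, cons_zmod_eq p 1 (hmem1 p hpT1)]

/-- `M(s,m)` covers any `s` stuck-at errors in a binary sequence of length `2^m`:
for every set of `s` distinct positions and every assignment of values to them,
some mask in `M(s,m)` takes exactly these values at these positions. -/
theorem maskSet_covers (s m : ℕ) (hs : 1 ≤ s) (hsm : s ≤ m)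
    (T : Finset (Fin m → ZMod 2)) (hT : T.card = s)
    (v : (Fin m → ZMod 2) → ZMod 2) :
    ∃ f ∈ maskSet m s, ∀ p ∈ T, f p = v p := by
  have h2 : s ≤ 2 ^ m := hsm.trans (Nat.lt_two_pow_self (n := m)).le
  exact maskSet_covers_aux m s hs h2 T hT v
end

section
/- For all integers 1 ≤ s ≤ m, the number of masks in the recursively constructed set satisfies |M(s,m)| ≤ 2^s · m^{s−1}. -/
open Set

theorem Set.ncard_image2_le {α β γ : Type*} (f : α → β → γ) {s : Set α} {t : Set β}
    (hs : s.Finite) (ht : t.Finite) : (image2 f s t).ncard ≤ s.ncard * t.ncard := by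
  rw [← image_prod, ← ncard_prod]
  exact ncard_image_le (hs.prod ht)

theorem Nat.pow_add_mul_pow_le_add_one_pow (m n : ℕ) :
    m ^ (n + 1) + (n + 1) * m ^ n ≤ (m + 1) ^ (n + 1) := by
  induction n with
  | zero => simp
  | succ n ih =>
    calc m ^ (n + 2) + (n + 2) * m ^ (n + 1)
        ≤ m ^ (n + 2) + (n + 2) * m ^ (n + 1) + (n + 1) * m ^ n := Nat.le_add_right _ _
      _ = (m + 1) * (m ^ (n + 1) + (n + 1) * m ^ n) := by ring
      _ ≤ (m + 1) * (m + 1) ^ (n + 1) := Nat.mul_le_mul_left _ ih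
      _ = (m + 1) ^ (n + 2) := by ring

theorem two_pow_two_pow_le {m s : ℕ} (hlt : 2 ^ m < s) (hle : s ≤ 2 ^ (m + 1)) :
    2 ^ 2 ^ (m + 1) ≤ 2 ^ s * (m + 1) ^ (s - 1) := by
  rcases Nat.eq_zero_or_pos m with rfl | hm
  · obtain rfl : s = 2 := by simp at hlt hle; omega
    norm_num
  · calc 2 ^ 2 ^ (m + 1) ≤ 2 ^ (s + (s - 1)) :=
          Nat.pow_le_pow_right two_pos (by rw [pow_succ]; omega)
      _ = 2 ^ s * 2 ^ (s - 1) := pow_add 2 s (s - 1)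
      _ ≤ 2 ^ s * (m + 1) ^ (s - 1) := by gcongr; omega

theorem two_pow_mul_pow_add_sum_le {m s : ℕ} (hs : 2 ≤ s) :
    2 ^ s * m ^ (s - 1) +
        ∑ i ∈ Finset.Ico 1 s, 2 ^ i * m ^ (i - 1) * (2 ^ (s - i) * m ^ (s - i - 1)) ≤
      2 ^ s * (m + 1) ^ (s - 1) := by
  have hterm : ∀ i ∈ Finset.Ico 1 s,
      2 ^ i * m ^ (i - 1) * (2 ^ (s - i) * m ^ (s - i - 1)) = 2 ^ s * m ^ (s - 2) := by
    intro i hi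
    rw [Finset.mem_Ico] at hi
    rw [mul_mul_mul_comm, ← pow_add, ← pow_add]
    congr 2 <;> omega
  rw [Finset.sum_congr rfl hterm, Finset.sum_const, Nat.card_Ico, smul_eq_mul]
  obtain ⟨t, rfl⟩ : ∃ t, s = t + 2 := ⟨s - 2, by omega⟩
  calc 2 ^ (t + 2) * m ^ (t + 1) + (t + 1) * (2 ^ (t + 2) * m ^ t)
      = 2 ^ (t + 2) * (m ^ (t + 1) + (t + 1) * m ^ t) := by ring
    _ ≤ 2 ^ (t + 2) * (m + 1) ^ (t + 1) := by gcongr; exact Nat.pow_add_mul_pow_le_add_one_pow m t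

section maskSet

variable {m s : ℕ}

def maskAppend (x y : (Fin m → ZMod 2) → ZMod 2) : (Fin (m + 1) → ZMod 2) → ZMod 2 :=
  fun p => if p 0 = 0 then x (Fin.tail p) else y (Fin.tail p)

theorem maskSet_succ_one : maskSet (m + 1) 1 = {fun _ => 0, fun _ => 1} := by
  simp [maskSet]

theorem maskSet_succ_of_le_clog (hs : 2 ≤ s) (h : m + 1 ≤ Nat.clog 2 s) :
    maskSet (m + 1) s = univ := by
  rw [maskSet, if_neg (by omega), if_pos h]

theorem maskSet_succ_of_clog_le (hs : 2 ≤ s) (h : Nat.clog 2 s ≤ m) :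
    maskSet (m + 1) s = (fun x => maskAppend x x) '' maskSet m s ∪
      ⋃ i ∈ Finset.Ico 1 s, image2 maskAppend (maskSet m i) (maskSet m (s - i)) := by
  rw [maskSet, if_neg (by omega), if_neg (by omega)]
  congr 1
  · congr 1
    funext x p
    simp [maskAppend]
  · ext f
    simp only [mem_iUnion, mem_image2, eq_comm]
    rfl

theorem ncard_maskSet_le_of_clog_le (hs : 1 ≤ s) (h : Nat.clog 2 s ≤ m) :
    (maskSet m s).ncard ≤ 2 ^ s * m ^ (s - 1) := by
  induction m generalizing s with
  | zero =>
    obtain rfl : s = 1 := by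
      have := (Nat.clog_le_iff_le_pow one_lt_two).1 h
      omega
    simp [maskSet]
  | succ m ih =>
    obtain rfl | hs2 : s = 1 ∨ 2 ≤ s := by omega
    · rw [maskSet_succ_one]
      exact (ncard_insert_le _ _).trans (by simp)
    by_cases hcl : m + 1 ≤ Nat.clog 2 s
    · rw [maskSet_succ_of_le_clog hs2 hcl, ncard_univ, Nat.card_eq_fintype_card]
      simpa using two_pow_two_pow_le ((Nat.lt_clog_iff_pow_lt one_lt_two).1 hcl)
        ((Nat.clog_le_iff_le_pow one_lt_two).1 h)
    have hcm : Nat.clog 2 s ≤ m := by omega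
    have ih_of_le : ∀ i ≤ s, 1 ≤ i → (maskSet m i).ncard ≤ 2 ^ i * m ^ (i - 1) :=
      fun i his hi => ih hi ((Nat.clog_mono_right 2 his).trans hcm)
    rw [maskSet_succ_of_clog_le hs2 hcm]
    calc _ ≤ ((fun x => maskAppend x x) '' maskSet m s).ncard +
          (⋃ i ∈ Finset.Ico 1 s, image2 maskAppend (maskSet m i) (maskSet m (s - i))).ncard :=
          ncard_union_le _ _
      _ ≤ 2 ^ s * m ^ (s - 1) +
          ∑ i ∈ Finset.Ico 1 s, 2 ^ i * m ^ (i - 1) * (2 ^ (s - i) * m ^ (s - i - 1)) := by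
        gcongr
        · exact (ncard_image_le (toFinite _)).trans (ih hs hcm)
        · refine (Finset.set_ncard_biUnion_le _ _).trans (Finset.sum_le_sum fun i hi => ?_)
          rw [Finset.mem_Ico] at hi
          exact (ncard_image2_le _ (toFinite _) (toFinite _)).trans
            (Nat.mul_le_mul (ih_of_le i (by omega) hi.1) (ih_of_le (s - i) (by omega) (by omega)))
      _ ≤ 2 ^ s * (m + 1) ^ (s - 1) := two_pow_mul_pow_add_sum_le hs2

end maskSet

/-- The number of masks in `M(s,m)` is at most `2^s * m^(s-1)`. -/
theorem maskSet_card_upper (s m : ℕ) (hs : 1 ≤ s) (hsm : s ≤ m) :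
    (maskSet m s).ncard ≤ 2 ^ s * m ^ (s - 1) :=
  ncard_maskSet_le_of_clog_le hs
    ((Nat.clog_le_of_le_pow Nat.lt_two_pow_self.le).trans hsm)
end

section
/- For all integers 1 ≤ s ≤ m, the set M(s,m) contains, for every squarefree monomial in m variables of total degree at most min(m, s−1), the evaluation vector of that monomial over 𝔽₂^m (i.e., every row of the standard generator matrix of RM(s−1,m)) as well as its componentwise complement. -/
lemma const_mem_maskSet_one (m : ℕ) :
    (fun _ => (0 : ZMod 2)) ∈ maskSet m 1 ∧ (fun _ => (1 : ZMod 2)) ∈ maskSet m 1 := by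
  cases m <;> simp [maskSet]

lemma prod_succ_preimage {m : ℕ} (A : Finset (Fin (m + 1))) (h0 : (0 : Fin (m + 1)) ∉ A)
    (p : Fin (m + 1) → ZMod 2) :
    ∏ j ∈ A.preimage Fin.succ (Fin.succ_injective m).injOn, p j.succ = ∏ i ∈ A, p i := by
  refine Finset.prod_preimage _ _ _ _ ?_
  intro x hx hrange
  exfalso
  cases x using Fin.cases with
  | zero => exact h0 hx
  | succ j => exact hrange ⟨j, rfl⟩

lemma card_succ_preimage_le {m : ℕ} (A : Finset (Fin (m + 1))) :
    (A.preimage Fin.succ (Fin.succ_injective m).injOn).card ≤ A.card :=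
  Finset.card_le_card_of_injOn Fin.succ (fun j hj => Finset.mem_preimage.mp hj)
    ((Fin.succ_injective m).injOn)

lemma maskSet_aux : ∀ m s : ℕ, 1 ≤ s → ∀ A : Finset (Fin m), A.card ≤ min m (s - 1) →
    (fun p : Fin m → ZMod 2 => ∏ i ∈ A, p i) ∈ maskSet m s ∧
      (fun p : Fin m → ZMod 2 => 1 + ∏ i ∈ A, p i) ∈ maskSet m s := by
  intro m
  induction m with
  | zero => intro s hs A hA; constructor <;> simp [maskSet]
  | succ m ih =>
    intro s hs A hA
    by_cases h1 : s ≤ 1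
    · have hs1 : s = 1 := le_antisymm h1 hs
      subst hs1
      have hA0 : A = ∅ := Finset.card_eq_zero.mp (by simpa using hA)
      subst hA0
      constructor
      · simp only [maskSet, if_pos le_rfl]
        right
        simp
      · simp only [maskSet, if_pos le_rfl]
        left
        funext p
        simp
        decide
    · by_cases h2 : m + 1 ≤ Nat.clog 2 s
      · constructor <;> simp [maskSet, h1, h2]
      · have hs2 : 2 ≤ s := by omega
        simp only [maskSet, if_neg h1, if_neg h2]
        by_cases h0 : (0 : Fin (m + 1)) ∈ A
        · -- use the split with i = 1
          set A' : Finset (Fin m) := (A.erase 0).preimage Fin.succ (Fin.succ_injective m).injOn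
            with hA'def
          have hcard : A'.card ≤ min m (s - 1 - 1) := by
            have h1' : A'.card ≤ (A.erase 0).card := card_succ_preimage_le _
            have h2' : (A.erase 0).card = A.card - 1 := Finset.card_erase_of_mem h0
            have h3' : A'.card ≤ m := le_trans (Finset.card_le_univ A') (by simp)
            omega
          obtain ⟨hy0, hy1⟩ := ih (s - 1) (by omega) A' hcard
          have key : ∀ p : Fin (m + 1) → ZMod 2,
              ∏ i ∈ A, p i = p 0 * ∏ j ∈ A', p j.succ := by
            intro p
            rw [hA'def, prod_succ_preimage _ (Finset.notMem_erase 0 A) p,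
              Finset.mul_prod_erase A p h0]
          constructor
          · right
            refine Set.mem_iUnion₂.mpr ⟨1, by simp [Finset.mem_Ico]; omega, ?_⟩
            refine ⟨fun _ => 0, (const_mem_maskSet_one m).1,
              fun q => ∏ j ∈ A', q j, hy0, ?_⟩
            funext p
            rcases zmod2_cases (p 0) with h | h
            · simp [key p, h]
            · rw [key p, h, if_neg (by decide)]
              simp [Fin.tail]
          · right
            refine Set.mem_iUnion₂.mpr ⟨1, by simp [Finset.mem_Ico]; omega, ?_⟩
            refine ⟨fun _ => 1, (const_mem_maskSet_one m).2,
              fun q => 1 + ∏ j ∈ A', q j, hy1, ?_⟩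
            funext p
            rcases zmod2_cases (p 0) with h | h
            · simp [key p, h]
            · rw [key p, h, if_neg (by decide)]
              simp [Fin.tail]
        · -- monomial does not involve variable 0
          set A' : Finset (Fin m) := A.preimage Fin.succ (Fin.succ_injective m).injOn
            with hA'def
          have hcard : A'.card ≤ min m (s - 1) := by
            have h1' : A'.card ≤ A.card := card_succ_preimage_le _
            have h3' : A'.card ≤ m := le_trans (Finset.card_le_univ A') (by simp)
            omega
          obtain ⟨hg0, hg1⟩ := ih s hs A' hcard
          have key : ∀ p : Fin (m + 1) → ZMod 2,
              ∏ i ∈ A, p i = ∏ j ∈ A', Fin.tail p j := by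
            intro p
            rw [hA'def]
            exact (prod_succ_preimage _ h0 p).symm ▸ rfl
          constructor
          · left
            exact ⟨fun q => ∏ j ∈ A', q j, hg0, by funext p; exact (key p).symm⟩
          · left
            exact ⟨fun q => 1 + ∏ j ∈ A', q j, hg1, by funext p; rw [key p]⟩

/-- `M(s,m)` contains the evaluation vector of every squarefree monomial of total
degree at most `min m (s-1)` (the rows of the standard generator matrix of
`RM(s-1,m)`), as well as its componentwise complement. -/
theorem maskSet_contains_generators (s m : ℕ) (hs : 1 ≤ s) (hsm : s ≤ m)
    (A : Finset (Fin m)) (hA : A.card ≤ min m (s - 1)) :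
    (fun p : Fin m → ZMod 2 => ∏ i ∈ A, p i) ∈ maskSet m s ∧
      (fun p : Fin m → ZMod 2 => 1 + ∏ i ∈ A, p i) ∈ maskSet m s :=
  maskSet_aux m s hs A hA
end

section
/- For all integers 1 ≤ s ≤ m, the cardinality of the mask set satisfies |M(s,m)| ≥ 2 · Σ_{i=0}^{min(m,s−1)} C(m,i), where C(m,i) denotes the binomial coefficient. -/
/-- Every constant function belongs to every mask set. -/
lemma const_mem (m s : ℕ) (c : ZMod 2) : (fun _ => c) ∈ maskSet m s := by
  induction m with
  | zero => simp [maskSet]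
  | succ m ih =>
    rw [maskSet]
    split_ifs with h1 h2
    · fin_cases c
      · left; rfl
      · right; rfl
    · trivial
    · exact Or.inl ⟨fun _ => c, ih, rfl⟩

/-- Mask sets are monotone in `s`. -/
lemma maskSet_mono : ∀ (m s s' : ℕ), s ≤ s' → maskSet m s ⊆ maskSet m s' := by
  intro m
  induction m with
  | zero => intro s s' _; simp [maskSet]
  | succ m ih =>
    intro s s' hss f hf
    rw [maskSet]
    split_ifs with h1 h2
    · rw [maskSet] at hf
      rw [if_pos (le_trans hss h1)] at hf
      exact hf
    · trivial
    · rw [maskSet] at hf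
      split_ifs at hf with g1 g2
      · rcases hf with hf | hf
        · subst hf
          have := const_mem (m+1) s' (0 : ZMod 2)
          rw [maskSet, if_neg h1, if_neg h2] at this
          exact this
        · rw [Set.mem_singleton_iff] at hf; subst hf
          have := const_mem (m+1) s' (1 : ZMod 2)
          rw [maskSet, if_neg h1, if_neg h2] at this
          exact this
      · exact absurd (le_trans g2 (Nat.clog_mono_right 2 hss)) h2
      · rcases hf with ⟨x, hx, rfl⟩ | hf
        · exact Or.inl ⟨x, ih s s' hss hx, rfl⟩
        · rw [Set.mem_iUnion₂] at hf
          obtain ⟨i, hi, x, hx, y, hy, hfe⟩ := hf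
          rw [Finset.mem_Ico] at hi
          refine Or.inr ?_
          rw [Set.mem_iUnion₂]
          exact ⟨i, Finset.mem_Ico.mpr ⟨hi.1, lt_of_lt_of_le hi.2 hss⟩,
            x, hx, y, ih (s - i) (s' - i) (by omega) hy, hfe⟩

/-- The subcube indicator function (shifted by `ε`). -/
def phi (m : ℕ) (T : Finset (Fin m)) (ε : ZMod 2) : (Fin m → ZMod 2) → ZMod 2 :=
  fun p => ε + ∏ j ∈ T, (1 + p j)

/-- A subcube indicator on `T` lies in the mask set `M(|T| + 1, m)`. -/
lemma phi_mem : ∀ (m : ℕ) (T : Finset (Fin m)) (ε : ZMod 2),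
    phi m T ε ∈ maskSet m (T.card + 1) := by
  intro m
  induction m with
  | zero => intro T ε; simp [maskSet]
  | succ m ih =>
    intro T ε
    rcases Nat.eq_zero_or_pos T.card with ht0 | htpos
    · rw [Finset.card_eq_zero] at ht0; subst ht0
      have : phi (m+1) ∅ ε = fun _ => ε + 1 := by
        funext p; simp [phi]
      rw [this]
      exact const_mem (m+1) 1 (ε + 1)
    · set T' : Finset (Fin m) := Finset.univ.filter (fun j => j.succ ∈ T) with hT'
      have hmemT' : ∀ j : Fin m, j ∈ T' ↔ j.succ ∈ T := by
        intro j; simp [hT']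
      rw [maskSet]
      rw [if_neg (by omega)]
      split_ifs with h2
      · trivial
      by_cases h0 : (0 : Fin (m+1)) ∈ T
      · have hTeq : T = insert 0 (T'.image Fin.succ) := by
          ext j
          refine Fin.cases ?_ ?_ j
          · simp [h0]
          · intro i
            simp only [Finset.mem_insert, Finset.mem_image]
            constructor
            · intro hi
              exact Or.inr ⟨i, (hmemT' i).mpr hi, rfl⟩
            · rintro (h | ⟨k, hk, hke⟩)
              · exact absurd h (Fin.succ_ne_zero i)
              · rw [← hke]; exact (hmemT' k).mp hk
        have h0ni : (0 : Fin (m+1)) ∉ T'.image Fin.succ := by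
          simp only [Finset.mem_image]
          rintro ⟨k, _, hk⟩
          exact Fin.succ_ne_zero k hk
        have hcard : T.card = T'.card + 1 := by
          rw [hTeq, Finset.card_insert_of_notMem h0ni,
            Finset.card_image_of_injective _ (Fin.succ_injective m)]
        refine Or.inr ?_
        rw [Set.mem_iUnion₂]
        refine ⟨T'.card + 1, Finset.mem_Ico.mpr ⟨by omega, by omega⟩,
          phi m T' ε, ih T' ε, (fun _ => ε), ?_, ?_⟩
        · have : T.card + 1 - (T'.card + 1) = 1 := by omega
          rw [this]
          exact const_mem m 1 ε
        · funext p
          have hprod : ∏ j ∈ T, (1 + p j)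
              = (1 + p 0) * ∏ j ∈ T', (1 + p j.succ) := by
            rw [hTeq, Finset.prod_insert h0ni,
              Finset.prod_image (fun a _ b _ h => Fin.succ_injective m h)]
          show ε + ∏ j ∈ T, (1 + p j) = _
          rw [hprod]
          rcases (show ∀ c : ZMod 2, c = 0 ∨ c = 1 by decide) (p 0) with h | h
          · rw [h, if_pos rfl]
            show ε + (1 + 0) * _ = ε + ∏ j ∈ T', (1 + Fin.tail p j)
            simp only [Fin.tail]
            ring
          · have e2 : (1 : ZMod 2) ≠ 0 := by decide
            rw [h, if_neg e2]
            have e1 : (1 + 1 : ZMod 2) = 0 := rfl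
            rw [e1]
            ring
      · have hTeq : T = T'.image Fin.succ := by
          ext j
          refine Fin.cases ?_ ?_ j
          · simp only [Finset.mem_image, h0, false_iff]
            rintro ⟨k, _, hk⟩
            exact Fin.succ_ne_zero k hk
          · intro i
            simp only [Finset.mem_image]
            constructor
            · intro hi; exact ⟨i, (hmemT' i).mpr hi, rfl⟩
            · rintro ⟨k, hk, hke⟩
              rw [← hke]; exact (hmemT' k).mp hk
        have hcard : T.card = T'.card := by
          rw [hTeq, Finset.card_image_of_injective _ (Fin.succ_injective m)]
        refine Or.inl ⟨phi m T' ε, ?_, ?_⟩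
        · rw [hcard]
          exact ih T' ε
        · funext p
          show ε + ∏ j ∈ T', (1 + Fin.tail p j) = ε + ∏ j ∈ T, (1 + p j)
          rw [hTeq, Finset.prod_image (fun a _ b _ h => Fin.succ_injective m h)]
          rfl

/-- The subcube indicators are pairwise distinct. -/
lemma phi_injective (m : ℕ) :
    Function.Injective (fun q : Finset (Fin m) × ZMod 2 => phi m q.1 q.2) := by
  rintro ⟨T, ε⟩ ⟨T', ε'⟩ h
  simp only at h
  have key : ∀ (S : Finset (Fin m)) (j : Fin m),
      (∏ i ∈ S, (1 + (if i = j then 1 else 0) : ZMod 2)) = if j ∈ S then 0 else 1 := by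
    intro S j
    split_ifs with hj
    · exact Finset.prod_eq_zero hj (by norm_num; rfl)
    · refine Finset.prod_eq_one ?_
      intro i hi
      have : i ≠ j := fun he => hj (he ▸ hi)
      rw [if_neg this, add_zero]
  have hε : ε = ε' := by
    have := congrFun h (fun _ => 0)
    simp only [phi, add_zero, Finset.prod_const_one] at this
    exact add_right_cancel this
  subst hε
  have hT : T = T' := by
    ext j
    have := congrFun h (fun i => if i = j then 1 else 0)
    simp only [phi, key] at this
    have h2 := add_left_cancel this
    by_contra hne
    rcases em (j ∈ T) with hj | hj
    · have hj' : j ∉ T' := fun hh => hne (iff_of_true hj hh)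
      rw [if_pos hj, if_neg hj'] at h2
      exact absurd h2 (by decide)
    · have hj' : j ∈ T' := by
        by_contra hj'
        exact hne (iff_of_false hj hj')
      rw [if_neg hj, if_pos hj'] at h2
      exact absurd h2 (by decide)
  rw [hT]

/-- Counting subsets of `Fin m` of size at most `k`. -/
lemma count_lemma (m k : ℕ) :
    (Finset.univ.filter (fun T : Finset (Fin m) => T.card ≤ k)).card
      = ∑ i ∈ Finset.range (k + 1), m.choose i := by
  have heq : Finset.univ.filter (fun T : Finset (Fin m) => T.card ≤ k)
      = (Finset.range (k + 1)).biUnion (fun i => Finset.powersetCard i Finset.univ) := by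
    ext T
    simp [Finset.mem_powersetCard, Nat.lt_succ_iff]
  rw [heq, Finset.card_biUnion]
  · refine Finset.sum_congr rfl ?_
    intro i _
    rw [Finset.card_powersetCard, Finset.card_univ, Fintype.card_fin]
  · intro i _ j _ hij
    refine Finset.disjoint_left.mpr ?_
    intro T hT hT'
    rw [Finset.mem_powersetCard] at hT hT'
    exact hij (hT.2 ▸ hT'.2 ▸ rfl)

/-- The number of masks in `M(s,m)` is at least `2 * ∑_{i=0}^{min(m, s-1)} C(m, i)`. -/
theorem maskSet_card_lower (s m : ℕ) (hs : 1 ≤ s) (hsm : s ≤ m) :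
    2 * ∑ i ∈ Finset.range (min m (s - 1) + 1), m.choose i ≤ (maskSet m s).ncard := by
  have hmin : min m (s - 1) = s - 1 := min_eq_right (by omega)
  rw [hmin]
  set I : Finset (Finset (Fin m) × ZMod 2) :=
    (Finset.univ.filter (fun T : Finset (Fin m) => T.card ≤ s - 1)) ×ˢ Finset.univ with hI
  have hIcard : I.card = (∑ i ∈ Finset.range (s - 1 + 1), m.choose i) * 2 := by
    rw [hI, Finset.card_product, count_lemma, Finset.card_univ]
    rfl
  set F : Finset ((Fin m → ZMod 2) → ZMod 2) :=
    I.image (fun q => phi m q.1 q.2) with hF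
  have hFcard : F.card = I.card := Finset.card_image_of_injective I (phi_injective m)
  have hsub : ↑F ⊆ maskSet m s := by
    intro f hf
    simp only [hF, Finset.coe_image, Set.mem_image, Finset.mem_coe] at hf
    obtain ⟨⟨T, ε⟩, hq, rfl⟩ := hf
    rw [hI, Finset.mem_product, Finset.mem_filter] at hq
    have hcard : T.card ≤ s - 1 := hq.1.2
    exact maskSet_mono m (T.card + 1) s (by omega) (phi_mem m T ε)
  calc 2 * ∑ i ∈ Finset.range (s - 1 + 1), m.choose i
      = F.card := by rw [hFcard, hIcard]; ring
    _ = (↑F : Set _).ncard := (Set.ncard_coe_finset F).symm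
    _ ≤ (maskSet m s).ncard := Set.ncard_le_ncard hsub (Set.toFinite _)
end

section
/- For all integers 2 ≤ s ≤ m, the minimum size of a label set for M(s,m) satisfies the upper bound L_min(s,m) ≤ 2^s · (2⌈log₂ |M(s,m)|⌉ − 1), where |M(s,m)| is the number of masks in the set. -/
/-- A finite set `L` of coordinate positions is a label set for (distinguishes) `S`
if distinct vectors of `S` have distinct restrictions to `L`. -/
def Distinguishes {ι : Type*} (L : Finset ι) (S : Set (ι → ZMod 2)) : Prop :=
  ∀ x ∈ S, ∀ y ∈ S, (∀ i ∈ L, x i = y i) → x = y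

/-- `L_min(s, m)`: the minimum cardinality of a label set for `M(s, m)`. -/
noncomputable def Lmin (s m : ℕ) : ℕ :=
  sInf {k | ∃ L : Finset (Fin m → ZMod 2), L.card = k ∧ Distinguishes L (maskSet m s)}

open Finset

def concatHalves {m : ℕ} (x y : (Fin m → ZMod 2) → ZMod 2) : (Fin (m + 1) → ZMod 2) → ZMod 2 :=
  fun p => if p 0 = 0 then x (Fin.tail p) else y (Fin.tail p)

theorem concatHalves_self {m : ℕ} (x : (Fin m → ZMod 2) → ZMod 2) :
    concatHalves x x = fun p => x (Fin.tail p) :=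
  funext fun _ => ite_self _

theorem hammingDist_concatHalves {m : ℕ} (u v w z : (Fin m → ZMod 2) → ZMod 2) :
    hammingDist (concatHalves u v) (concatHalves w z) = hammingDist u w + hammingDist v z := by
  simp only [hammingDist, card_filter]
  rw [← (Fin.consEquiv fun _ => ZMod 2).sum_comp, Fintype.sum_prod_type]
  exact Fin.sum_univ_two _

theorem const_mem_maskSet (c : ZMod 2) (m s : ℕ) : (fun _ => c) ∈ maskSet m s := by
  induction m with
  | zero => trivial
  | succ m ih =>
    rw [maskSet]
    split_ifs
    · have : ∀ c : ZMod 2, c = 0 ∨ c = 1 := by decide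
      rcases this c with rfl | rfl
      exacts [.inl rfl, .inr rfl]
    · trivial
    · exact .inl ⟨_, ih, rfl⟩

theorem clog_two_lt_self {a : ℕ} (ha : 1 ≤ a) : Nat.clog 2 a < a := by
  have := Nat.lt_two_pow_self (n := a - 1)
  have : Nat.clog 2 a ≤ a - 1 := Nat.clog_le_of_le_pow (by omega)
  omega

/-- The halves of a mask in `M(s, m + 1)` may lie in any `M(a, m)` with `a ≤ s`, so the distance
bound is proved for this union. -/
def masksUpTo (s m : ℕ) : Set ((Fin m → ZMod 2) → ZMod 2) :=
  ⋃ a ∈ Set.Icc 1 s, maskSet m a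

theorem maskSet_subset_masksUpTo {a s m : ℕ} (ha : 1 ≤ a) (has : a ≤ s) :
    maskSet m a ⊆ masksUpTo s m :=
  Set.subset_biUnion_of_mem (u := fun a => maskSet m a) ⟨ha, has⟩

theorem one_le_of_mem_masksUpTo {s m : ℕ} {f : (Fin m → ZMod 2) → ZMod 2}
    (hf : f ∈ masksUpTo s m) : 1 ≤ s := by
  obtain ⟨a, ha, -⟩ := Set.mem_iUnion₂.1 hf
  exact ha.1.trans ha.2

theorem mem_masksUpTo_succ {s m : ℕ} {f : (Fin (m + 1) → ZMod 2) → ZMod 2}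
    (hf : f ∈ masksUpTo s (m + 1)) :
    m + 1 < s ∨ ∃ x ∈ masksUpTo s m, ∃ y ∈ masksUpTo s m,
      (x = y ∨ x ∈ masksUpTo (s - 1) m ∧ y ∈ masksUpTo (s - 1) m) ∧ f = concatHalves x y := by
  obtain ⟨a, ⟨ha, has⟩, hf⟩ := Set.mem_iUnion₂.1 hf
  have hsub := maskSet_subset_masksUpTo (m := m) ha has
  rw [maskSet] at hf
  split_ifs at hf with h1 h2
  · obtain ⟨c, rfl⟩ : ∃ c, f = fun _ => c := by rcases hf with rfl | rfl <;> exact ⟨_, rfl⟩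
    have hc := hsub (const_mem_maskSet c m a)
    exact .inr ⟨_, hc, _, hc, .inl rfl, (concatHalves_self fun _ => c).symm⟩
  · exact .inl ((h2.trans_lt (clog_two_lt_self ha)).trans_le has)
  · rcases hf with ⟨x, hx, rfl⟩ | hf
    · exact .inr ⟨x, hsub hx, x, hsub hx, .inl rfl, (concatHalves_self x).symm⟩
    · simp only [Set.mem_iUnion, Finset.mem_Ico] at hf
      obtain ⟨i, hi, x, hx, y, hy, rfl⟩ := hf
      exact .inr ⟨x, maskSet_subset_masksUpTo hi.1 (by omega) hx,
        y, maskSet_subset_masksUpTo (by omega) (by omega) hy,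
        .inr ⟨maskSet_subset_masksUpTo hi.1 (by omega) hx,
          maskSet_subset_masksUpTo (by omega) (by omega) hy⟩, rfl⟩

theorem mem_and_mem_of_eq_of_ne {α : Type*} {T : Set α} {u v w z : α}
    (hf : u = v ∨ u ∈ T ∧ v ∈ T) (hg : w = z ∨ w ∈ T ∧ z ∈ T) (huw : u = w) (hvz : v ≠ z) :
    v ∈ T ∧ z ∈ T := by
  grind

theorem two_pow_le_mul_hammingDist (m s : ℕ) {f g : (Fin m → ZMod 2) → ZMod 2}
    (hf : f ∈ masksUpTo s m) (hg : g ∈ masksUpTo s m) (hfg : f ≠ g) :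
    2 ^ m ≤ 2 ^ (s - 1) * hammingDist f g := by
  induction m generalizing s with
  | zero =>
    exact Nat.one_le_iff_ne_zero.2 (mul_ne_zero (by positivity) (hammingDist_ne_zero.2 hfg))
  | succ m ih =>
    have hd := hammingDist_pos.2 hfg
    have high_order : m + 1 < s → 2 ^ (m + 1) ≤ 2 ^ (s - 1) * hammingDist f g := fun h =>
      (Nat.pow_le_pow_right (by norm_num) (by omega)).trans (Nat.le_mul_of_pos_right _ hd)
    rcases mem_masksUpTo_succ hf with h | ⟨u, hu, v, hv, hf', rfl⟩
    · exact high_order h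
    rcases mem_masksUpTo_succ hg with h | ⟨w, hw, z, hz, hg', rfl⟩
    · exact high_order h
    rw [hammingDist_concatHalves]
    have lower_order : ∀ x ∈ masksUpTo (s - 1) m, ∀ y ∈ masksUpTo (s - 1) m, x ≠ y →
        2 ^ (m + 1) ≤ 2 ^ (s - 1) * hammingDist x y := fun x hx y hy hxy => by
      have hs := one_le_of_mem_masksUpTo hx
      have := ih (s - 1) hx hy hxy
      rw [pow_succ, show s - 1 = s - 1 - 1 + 1 by omega, pow_succ]
      nlinarith
    by_cases huw : u = w
    · have hvz : v ≠ z := fun hvz => hfg (by rw [huw, hvz])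
      obtain ⟨hv', hz'⟩ := mem_and_mem_of_eq_of_ne hf' hg' huw hvz
      exact (lower_order v hv' z hz' hvz).trans (Nat.mul_le_mul_left _ (Nat.le_add_left _ _))
    by_cases hvz : v = z
    · obtain ⟨hu', hw'⟩ :=
        mem_and_mem_of_eq_of_ne (hf'.imp Eq.symm And.symm) (hg'.imp Eq.symm And.symm) hvz huw
      exact (lower_order u hu' w hw' huw).trans (Nat.mul_le_mul_left _ (Nat.le_add_right _ _))
    have := ih s hu hw huw
    have := ih s hv hz hvz
    rw [pow_succ, mul_add]
    omega

theorem card_filter_eq_sub_hammingDist {ι β : Type*} [Fintype ι] [DecidableEq β] (x y : ι → β) :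
    #{i | x i = y i} = Fintype.card ι - hammingDist x y := by
  have := card_filter_add_card_filter_not (s := univ) fun i => x i = y i
  rw [card_univ] at this
  simp only [hammingDist, ne_eq]
  omega

theorem exists_distinguishes_card_le {ι : Type*} [Fintype ι]
    (S : Set (ι → ZMod 2)) (d t : ℕ) (hd : ∀ x ∈ S, ∀ y ∈ S, x ≠ y → d ≤ hammingDist x y)
    (ht : S.ncard * (S.ncard - 1) * (Fintype.card ι - d) ^ t < Fintype.card ι ^ t) :
    ∃ L : Finset ι, L.card ≤ t ∧ Distinguishes L S := by
  classical
  set F := (Set.toFinite S).toFinset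
  let agree (p : (ι → ZMod 2) × (ι → ZMod 2)) : Finset (Fin t → ι) :=
    Fintype.piFinset fun _ => {i | p.1 i = p.2 i}
  have hbad : #(F.offDiag.biUnion agree) < #(univ : Finset (Fin t → ι)) := calc
    _ ≤ ∑ p ∈ F.offDiag, #(agree p) := card_biUnion_le
    _ ≤ ∑ p ∈ F.offDiag, (Fintype.card ι - d) ^ t := by
      refine sum_le_sum fun p hp => ?_
      simp only [mem_offDiag, F, Set.Finite.mem_toFinset] at hp
      rw [Fintype.card_piFinset_const, card_filter_eq_sub_hammingDist]
      exact Nat.pow_le_pow_left (Nat.sub_le_sub_left (hd _ hp.1 _ hp.2.1 hp.2.2) _) t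
    _ = S.ncard * (S.ncard - 1) * (Fintype.card ι - d) ^ t := by
      rw [sum_const, offDiag_card, smul_eq_mul, Set.ncard_eq_toFinset_card S, Nat.mul_sub_one]
    _ < _ := by simpa using ht
  obtain ⟨c, -, hc⟩ := exists_mem_notMem_of_card_lt_card hbad
  refine ⟨univ.image c, card_image_le.trans (by simp), fun x hx y hy hxy => ?_⟩
  by_contra hne
  refine hc (mem_biUnion.2 ⟨(x, y), by simp [F, hx, hy, hne], ?_⟩)
  simp only [agree, Fintype.mem_piFinset, mem_filter_univ]
  exact fun i => hxy _ (mem_image_of_mem _ (mem_univ i))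

theorem two_mul_pred_pow_le_pow {k : ℕ} (hk : 1 ≤ k) : 2 * (k - 1) ^ k ≤ k ^ k := by
  obtain ⟨j, rfl⟩ := Nat.exists_eq_add_of_le' hk
  have bernoulli := pow_add_mul_le_add_pow (a := j) (b := 1) (Nat.zero_le _) (by omega) (j + 1)
  simp only [Nat.add_sub_cancel, mul_one] at bernoulli ⊢
  have : j ^ (j + 1) ≤ (j + 1) * j ^ j := by rw [pow_succ, mul_comm]; gcongr; omega
  push_cast at bernoulli
  omega

theorem mul_pred_lt_four_pow (n : ℕ) : n * (n - 1) < 4 ^ (2 * Nat.clog 2 n - 1) := by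
  rcases Nat.lt_or_ge n 3 with hn | hn
  · interval_cases n <;> simp [Nat.clog_of_two_le]
  have hK : 1 < Nat.clog 2 n := (Nat.lt_clog_iff_pow_lt (by norm_num)).2 (by omega)
  have hn2 : n ≤ 2 ^ Nat.clog 2 n := Nat.le_pow_clog (by norm_num) n
  calc n * (n - 1) < 2 ^ Nat.clog 2 n * 2 ^ Nat.clog 2 n :=
        Nat.mul_lt_mul_of_le_of_lt hn2 (by omega) (by positivity)
    _ = 4 ^ Nat.clog 2 n := by rw [← mul_pow]; norm_num
    _ ≤ 4 ^ (2 * Nat.clog 2 n - 1) := Nat.pow_le_pow_right (by norm_num) (by omega)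

theorem mul_pred_mul_sub_pow_lt (n : ℕ) {k c : ℕ} (hk : 1 ≤ k) (hc : 0 < c) :
    n * (n - 1) * (k * c - c) ^ (2 * k * (2 * Nat.clog 2 n - 1)) <
      (k * c) ^ (2 * k * (2 * Nat.clog 2 n - 1)) := by
  set e := 2 * Nat.clog 2 n - 1
  have hpow : 4 ^ e * (k - 1) ^ (2 * k * e) ≤ k ^ (2 * k * e) := calc
    4 ^ e * (k - 1) ^ (2 * k * e) = (2 * (k - 1) ^ k) ^ (2 * e) := by
      rw [mul_pow, ← pow_mul, pow_mul 2 2 e]; ring_nf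
    _ ≤ (k ^ k) ^ (2 * e) := Nat.pow_le_pow_left (two_mul_pred_pow_le_pow hk) _
    _ = k ^ (2 * k * e) := by rw [← pow_mul, mul_left_comm, mul_assoc]
  have hpred : n * (n - 1) * (k - 1) ^ (2 * k * e) < k ^ (2 * k * e) := by
    rcases Nat.eq_zero_or_pos ((k - 1) ^ (2 * k * e)) with h0 | hpos
    · rw [h0, mul_zero]; positivity
    · exact (Nat.mul_lt_mul_of_pos_right (mul_pred_lt_four_pow n) hpos).trans_le hpow
  rw [← Nat.sub_one_mul, mul_pow, mul_pow, ← mul_assoc]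
  exact Nat.mul_lt_mul_of_pos_right hpred (by positivity)

/-- Upper bound on the minimum label size:
`L_min(s,m) ≤ 2^s * (2 * ⌈log₂ |M(s,m)|⌉ - 1)`. -/
theorem Lmin_upper (s m : ℕ) (hs : 2 ≤ s) (hsm : s ≤ m) :
    Lmin s m ≤ 2 ^ s * (2 * Nat.clog 2 (maskSet m s).ncard - 1) := by
  have hsplit : 2 ^ m = 2 ^ (s - 1) * 2 ^ (m - s + 1) := by rw [← pow_add]; congr 1; omega
  have hdist (f) (hf : f ∈ maskSet m s) (g) (hg : g ∈ maskSet m s) (hfg : f ≠ g) :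
      2 ^ (m - s + 1) ≤ hammingDist f g := by
    have hsub := maskSet_subset_masksUpTo (m := m) (by omega : 1 ≤ s) le_rfl
    refine Nat.le_of_mul_le_mul_left ?_ (by positivity : 0 < 2 ^ (s - 1))
    rw [← hsplit]
    exact two_pow_le_mul_hammingDist m s (hsub hf) (hsub hg) hfg
  have hcard : Fintype.card (Fin m → ZMod 2) = 2 ^ (s - 1) * 2 ^ (m - s + 1) := by
    simp [hsplit]
  have ht : 2 ^ s = 2 * 2 ^ (s - 1) := by rw [← pow_succ']; congr 1; omega
  obtain ⟨L, hLt, hL⟩ := exists_distinguishes_card_le (maskSet m s) _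
    (2 ^ s * (2 * Nat.clog 2 (maskSet m s).ncard - 1)) hdist
    (by rw [hcard, ht]; exact mul_pred_mul_sub_pow_lt _ Nat.one_le_two_pow (by positivity))
  exact (Nat.sInf_le ⟨L, rfl, hL⟩ : Lmin s m ≤ L.card).trans hLt
end

section
/- Let S be a set of N ≥ 2 distinct vectors in 𝔽₂^n such that any two distinct vectors of S differ in at least d ≥ 1 coordinates, and let L be a natural number such that (N(N−1)/2)·(1 − d/n)^L < 1. Then there exists a set of at most L coordinate positions on which distinct vectors of S have distinct restrictions. -/
def badPairs {n : ℕ} (S : Finset (Fin n → ZMod 2)) (T : Finset (Fin n)) :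
    Finset ((Fin n → ZMod 2) × (Fin n → ZMod 2)) :=
  (S ×ˢ S).filter (fun p => p.1 ≠ p.2 ∧ ∀ i ∈ T, p.1 i = p.2 i)

lemma badPairs_insert {n : ℕ} (S : Finset (Fin n → ZMod 2)) (T : Finset (Fin n)) (i : Fin n) :
    badPairs S (insert i T) = (badPairs S T).filter (fun p => p.1 i = p.2 i) := by
  ext p
  simp only [badPairs, Finset.mem_filter, Finset.mem_insert]
  constructor
  · rintro ⟨hm, hne, h⟩
    exact ⟨⟨hm, hne, fun j hj => h j (Or.inr hj)⟩, h i (Or.inl rfl)⟩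
  · rintro ⟨⟨hm, hne, h⟩, hi⟩
    refine ⟨hm, hne, fun j hj => ?_⟩
    rcases hj with rfl | hj
    · exact hi
    · exact h j hj

lemma sum_card_disagree {n : ℕ} (S : Finset (Fin n → ZMod 2)) (T : Finset (Fin n)) :
    ∑ i : Fin n, ((badPairs S T).filter (fun p => p.1 i ≠ p.2 i)).card
      = ∑ p ∈ badPairs S T, hammingDist p.1 p.2 := by
  simp only [Finset.card_filter, hammingDist]
  rw [Finset.sum_comm]

/-- Greedy labeling bound: if `S` is a set of `N ≥ 2` vectors in `𝔽₂^n` with pairwise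
Hamming distance at least `d ≥ 1`, and `L` satisfies `(N(N-1)/2) * (1 - d/n)^L < 1`,
then some set of at most `L` coordinate positions distinguishes the vectors of `S`. -/
theorem greedy_label_exists (n N d L : ℕ) (hN : 2 ≤ N) (hd : 1 ≤ d)
    (S : Finset (Fin n → ZMod 2)) (hS : S.card = N)
    (hdist : ∀ x ∈ S, ∀ y ∈ S, x ≠ y → d ≤ hammingDist x y)
    (hL : ((N : ℝ) * (N - 1) / 2) * (1 - (d : ℝ) / (n : ℝ)) ^ L < 1) :
    ∃ T : Finset (Fin n), T.card ≤ L ∧ Distinguishes T (S : Set (Fin n → ZMod 2)) := by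
  obtain ⟨x₀, hx₀, y₀, hy₀, hxy₀⟩ := Finset.one_lt_card.mp (by omega : 1 < S.card)
  have hdn : d ≤ n := le_trans (hdist x₀ hx₀ y₀ hy₀ hxy₀)
    (le_trans (hammingDist_le_card_fintype) (by simp))
  have hn : 0 < n := lt_of_lt_of_le hd hdn
  have hn' : (0:ℝ) < n := by exact_mod_cast hn
  have hr0 : (0:ℝ) ≤ 1 - (d:ℝ)/n := by
    rw [sub_nonneg, div_le_one hn']; exact_mod_cast hdn
  have key : ∀ k : ℕ, ∃ T : Finset (Fin n), T.card ≤ k ∧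
      ((badPairs S T).card : ℝ) ≤ (N:ℝ) * (N-1) * (1 - (d:ℝ)/n) ^ k := by
    intro k
    induction k with
    | zero =>
      refine ⟨∅, le_refl _, ?_⟩
      simp only [pow_zero, mul_one]
      have hsub : badPairs S ∅ ⊆ (S ×ˢ S) \ (S ×ˢ S).filter (fun p => p.1 = p.2) := by
        intro p hp
        simp only [badPairs, Finset.mem_filter, Finset.mem_sdiff] at hp ⊢
        exact ⟨hp.1, fun h => hp.2.1 h.2⟩
      have hdiag : ((S ×ˢ S).filter (fun p => p.1 = p.2)).card = N := by
        rw [← hS]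
        apply Finset.card_bij (fun p _ => p.1)
        · intro p hp; simp only [Finset.mem_filter, Finset.mem_product] at hp; exact hp.1.1
        · intro p hp q hq h
          simp only [Finset.mem_filter] at hp hq
          exact Prod.ext h (by rw [← hp.2, ← hq.2, h])
        · intro a ha; exact ⟨(a,a), by simp [ha], rfl⟩
      have h1 := Finset.card_le_card hsub
      rw [Finset.card_sdiff_of_subset (Finset.filter_subset _ _), hdiag, Finset.card_product, hS] at h1
      have hcast : ((badPairs S ∅).card : ℝ) ≤ ((N*N - N : ℕ) : ℝ) := by exact_mod_cast h1
      have : ((N*N - N : ℕ) : ℝ) = (N:ℝ) * (N - 1) := by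
        rw [Nat.cast_sub (Nat.le_mul_of_pos_left N (by omega))]
        push_cast; ring
      linarith [hcast, this.le]
    | succ k ih =>
      obtain ⟨T, hTc, hTb⟩ := ih
      by_cases hB : (badPairs S T) = ∅
      · refine ⟨T, le_trans hTc (Nat.le_succ k), ?_⟩
        rw [hB]
        simp only [Finset.card_empty, Nat.cast_zero]
        have hN1 : (1:ℝ) ≤ N := by exact_mod_cast (by omega : 1 ≤ N)
        have hNN : (0:ℝ) ≤ (N:ℝ)*((N:ℝ)-1) := by nlinarith
        exact mul_nonneg hNN (pow_nonneg hr0 (k+1))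
      · set B := badPairs S T with hBdef
        have hsum : ∑ i : Fin n, (B.filter (fun p => p.1 i ≠ p.2 i)).card
            = ∑ p ∈ B, hammingDist p.1 p.2 := sum_card_disagree S T
        have hge : d * B.card ≤ ∑ p ∈ B, hammingDist p.1 p.2 := by
          calc d * B.card = ∑ _p ∈ B, d := by rw [Finset.sum_const, smul_eq_mul, mul_comm]
            _ ≤ ∑ p ∈ B, hammingDist p.1 p.2 := by
                apply Finset.sum_le_sum
                intro p hp
                simp only [hBdef, badPairs, Finset.mem_filter, Finset.mem_product] at hp
                exact hdist p.1 hp.1.1 p.2 hp.1.2 hp.2.1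
        have hsplit : ∀ i : Fin n, (B.filter (fun p => p.1 i = p.2 i)).card
            + (B.filter (fun p => p.1 i ≠ p.2 i)).card = B.card := fun i =>
          Finset.card_filter_add_card_filter_not _
        have hupper : ∑ i : Fin n, (B.filter (fun p => p.1 i = p.2 i)).card
            ≤ (n - d) * B.card := by
          have h2 : ∑ i : Fin n, ((B.filter (fun p => p.1 i = p.2 i)).card
              + (B.filter (fun p => p.1 i ≠ p.2 i)).card) = n * B.card := by
            simp [hsplit, Finset.sum_const, Finset.card_univ]
          rw [Finset.sum_add_distrib, hsum] at h2
          rw [Nat.sub_mul]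
          omega
        have hexists : ∃ i : Fin n, n * (B.filter (fun p => p.1 i = p.2 i)).card
            ≤ (n - d) * B.card := by
          by_contra hcon
          push_neg at hcon
          have : ∑ i : Fin n, ((n-d) * B.card + 1) ≤ ∑ i : Fin n, n * (B.filter (fun p => p.1 i = p.2 i)).card :=
            Finset.sum_le_sum (fun i _ => hcon i)
          rw [Finset.sum_const, ← Finset.mul_sum, smul_eq_mul, Finset.card_univ] at this
          simp only [Fintype.card_fin] at this
          have h3 : n * ∑ i : Fin n, (B.filter (fun p => p.1 i = p.2 i)).card ≤ n * ((n-d) * B.card) :=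
            Nat.mul_le_mul_left n hupper
          nlinarith [hn]
        obtain ⟨i, hi⟩ := hexists
        refine ⟨insert i T, le_trans (Finset.card_insert_le i T) (by omega), ?_⟩
        rw [badPairs_insert]
        have hcast : ((B.filter (fun p => p.1 i = p.2 i)).card : ℝ)
            ≤ (1 - (d:ℝ)/n) * B.card := by
          have hi' : (n : ℝ) * ((B.filter (fun p => p.1 i = p.2 i)).card : ℝ)
              ≤ ((n:ℝ) - d) * B.card := by
            have := hi
            have hnd : ((n - d : ℕ) : ℝ) = (n:ℝ) - d := by
              rw [Nat.cast_sub hdn]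
            exact_mod_cast this
          have heq : (1 - (d:ℝ)/n) * B.card = (((n:ℝ) - d) * B.card) / n := by
            field_simp
          rw [heq, le_div_iff₀ hn']
          linarith
        calc ((B.filter (fun p => p.1 i = p.2 i)).card : ℝ)
            ≤ (1 - (d:ℝ)/n) * B.card := hcast
          _ ≤ (1 - (d:ℝ)/n) * ((N:ℝ) * (N-1) * (1 - (d:ℝ)/n) ^ k) := by
              apply mul_le_mul_of_nonneg_left hTb hr0
          _ = (N:ℝ) * (N-1) * (1 - (d:ℝ)/n) ^ (k+1) := by ring
  obtain ⟨T, hTc, hTb⟩ := key L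
  refine ⟨T, hTc, ?_⟩
  have hlt2 : ((badPairs S T).card : ℝ) < 2 := by
    calc ((badPairs S T).card : ℝ) ≤ (N:ℝ) * (N-1) * (1 - (d:ℝ)/n) ^ L := hTb
      _ < 2 := by nlinarith [hL]
  have hempty : badPairs S T = ∅ := by
    by_contra hne
    obtain ⟨p, hp⟩ := Finset.nonempty_iff_ne_empty.mpr hne
    have hm := hp
    simp only [badPairs, Finset.mem_filter, Finset.mem_product] at hm
    have hp' : (p.2, p.1) ∈ badPairs S T := by
      simp only [badPairs, Finset.mem_filter, Finset.mem_product]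
      exact ⟨⟨hm.1.2, hm.1.1⟩, Ne.symm hm.2.1, fun j hj => (hm.2.2 j hj).symm⟩
    have hpp : p ≠ (p.2, p.1) := fun h => hm.2.1 (congrArg Prod.fst h)
    have h2 : 1 < (badPairs S T).card := Finset.one_lt_card.mpr ⟨p, hp, (p.2,p.1), hp', hpp⟩
    have : (2:ℝ) ≤ ((badPairs S T).card : ℝ) := by exact_mod_cast h2
    linarith
  intro x hx y hy h
  by_contra hne
  have : (x, y) ∈ badPairs S T := by
    simp only [badPairs, Finset.mem_filter, Finset.mem_product]
    exact ⟨⟨hx, hy⟩, hne, h⟩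
  rw [hempty] at this
  exact absurd this (Finset.notMem_empty _)
end

section
/- For every integer m ≥ 1, the mask set M(2,m) consists exactly of the evaluation vectors over 𝔽₂^m of the m+1 monomials 1, x₁, …, x_m (the rows of the standard generator matrix of RM(1,m)) together with their componentwise complements. -/
lemma zc (a : ZMod 2) : a = 0 ∨ a = 1 := by revert a; decide

lemma maskSet_one (m : ℕ) : maskSet m 1 = ({fun _ => 0, fun _ => 1} : Set ((Fin m → ZMod 2) → ZMod 2)) := by
  cases m with
  | zero =>
    simp only [maskSet]
    ext f
    simp only [Set.mem_univ, true_iff, Set.mem_insert_iff, Set.mem_singleton_iff]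
    have hf : f = fun _ => f default := by
      funext p; congr 1; exact Subsingleton.elim _ _
    rcases zc (f default) with h | h
    · left; rw [hf, h]
    · right; rw [hf, h]
  | succ k => simp [maskSet]

lemma maskSet_two_succ (k : ℕ) (hk : 1 ≤ k) :
    maskSet (k + 1) 2 =
      ((fun g : (Fin k → ZMod 2) → ZMod 2 => fun p => g (Fin.tail p)) '' maskSet k 2) ∪
        {f | ∃ x ∈ maskSet k 1, ∃ y ∈ maskSet k 1,
            f = fun p => if p 0 = 0 then x (Fin.tail p) else y (Fin.tail p)} := by
  have h1 : Nat.clog 2 2 = 1 := by norm_num [Nat.clog]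
  simp only [maskSet]
  rw [if_neg (by omega), if_neg (by omega)]
  congr 1
  rw [show Finset.Ico 1 2 = {1} from rfl]
  simp

/-- `M(2,m)` consists exactly of the evaluation vectors of the monomials
`1, x₁, …, x_m` (the rows of the standard generator matrix of `RM(1,m)`)
together with their componentwise complements. -/
theorem maskSet_two_eq (m : ℕ) (hm : 1 ≤ m) :
    maskSet m 2 =
      ({fun _ => 1} ∪ {fun _ => 0} ∪ (⋃ j : Fin m, {fun p => p j}) ∪
        (⋃ j : Fin m, {fun p => 1 + p j}) :
        Set ((Fin m → ZMod 2) → ZMod 2)) := by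
  induction m with
  | zero => omega
  | succ k ih =>
    rcases Nat.eq_zero_or_pos k with rfl | hk
    · -- base case m = 1
      have huniv : maskSet 1 2 = Set.univ := by
        simp only [maskSet]
        rw [if_neg (by omega), if_pos (by norm_num [Nat.clog])]
      rw [huniv]
      ext f
      simp only [Set.mem_univ, true_iff, Set.mem_union, Set.mem_singleton_iff, Set.mem_iUnion]
      have hp : ∀ (p : Fin 1 → ZMod 2) (c : ZMod 2), p 0 = c → p = fun _ => c := by
        intro p c h; funext i; fin_cases i; exact h
      rcases zc (f (fun _ => 0)) with h0 | h0 <;> rcases zc (f (fun _ => 1)) with h1 | h1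
      · left; left; right
        funext p
        rcases zc (p 0) with h | h <;> rw [hp p _ h] <;> assumption
      · left; right; refine ⟨0, ?_⟩
        funext p
        rcases zc (p 0) with h | h <;> rw [hp p _ h] <;> simpa
      · right; refine ⟨0, ?_⟩
        funext p
        rcases zc (p 0) with h | h <;> rw [hp p _ h]
        · simpa
        · show f _ = 1 + 1; rw [h1]; decide
      · left; left; left
        funext p
        rcases zc (p 0) with h | h <;> rw [hp p _ h] <;> assumption
    · -- inductive step
      have key := maskSet_two_succ k hk
      rw [maskSet_one, ih hk] at key
      rw [key]
      ext f
      simp only [Set.mem_union, Set.mem_singleton_iff, Set.mem_iUnion, Set.mem_image,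
        Set.mem_setOf_eq, Set.mem_insert_iff]
      constructor
      · rintro (⟨g, hg, rfl⟩ | ⟨x, hx, y, hy, rfl⟩)
        · rcases hg with ((rfl | rfl) | ⟨j, rfl⟩) | ⟨j, rfl⟩
          · left; left; left; rfl
          · left; left; right; rfl
          · left; right; exact ⟨j.succ, rfl⟩
          · right; exact ⟨j.succ, rfl⟩
        · rcases hx with rfl | rfl <;> rcases hy with rfl | rfl
          · left; left; right
            funext p; simp
          · left; right; refine ⟨0, ?_⟩
            funext p
            rcases zc (p 0) with h | h <;> simp [h]
          · right; refine ⟨0, ?_⟩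
            funext p
            rcases zc (p 0) with h | h <;> simp [h] <;> decide
          · left; left; left
            funext p; simp
      · rintro (((rfl | rfl) | ⟨j, rfl⟩) | ⟨j, rfl⟩)
        · right; refine ⟨_, Or.inr rfl, _, Or.inr rfl, ?_⟩
          funext p; simp
        · right; refine ⟨_, Or.inl rfl, _, Or.inl rfl, ?_⟩
          funext p; simp
        · rcases Fin.eq_zero_or_eq_succ j with rfl | ⟨i, rfl⟩
          · right; refine ⟨_, Or.inl rfl, _, Or.inr rfl, ?_⟩
            funext p
            rcases zc (p 0) with h | h <;> simp [h]
          · left; exact ⟨fun q => q i, Or.inl (Or.inr ⟨i, rfl⟩), rfl⟩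
        · rcases Fin.eq_zero_or_eq_succ j with rfl | ⟨i, rfl⟩
          · right; refine ⟨_, Or.inr rfl, _, Or.inl rfl, ?_⟩
            funext p
            rcases zc (p 0) with h | h <;> simp [h] <;> decide
          · left; exact ⟨fun q => 1 + q i, Or.inr ⟨i, rfl⟩, rfl⟩
end

section
/- Let 0 ≤ r < m. For every set T of coordinate positions of 𝔽₂^{2^m} with |T| < 2^{r+1} and every assignment of values in 𝔽₂ to the positions in T, there exists a codeword of the Reed–Muller code RM(r,m) taking exactly these values at these positions; equivalently, any fewer than 2^{r+1} columns of a generator matrix of RM(r,m) are linearly independent. -/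
/-- The Reed–Muller code `RM(r, m)`: the set of evaluation vectors over `𝔽₂^m` of
polynomials in `m` variables over `𝔽₂` of total degree at most `r`. -/
def RMCode (r m : ℕ) : Set ((Fin m → ZMod 2) → ZMod 2) :=
  {f | ∃ q : MvPolynomial (Fin m) (ZMod 2),
    q.totalDegree ≤ r ∧ ∀ x : Fin m → ZMod 2, f x = MvPolynomial.eval x q}

open MvPolynomial

/-- Constant-case interpolation: if `T` has at most one element, a constant works. -/
lemma interp_const {m r : ℕ} (T : Finset (Fin m → ZMod 2))
    (hT : T.card ≤ 1) (v : (Fin m → ZMod 2) → ZMod 2) :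
    ∃ q : MvPolynomial (Fin m) (ZMod 2), q.totalDegree ≤ r ∧
      ∀ p ∈ T, MvPolynomial.eval p q = v p := by
  rcases T.eq_empty_or_nonempty with h | ⟨t, ht⟩
  · exact ⟨0, by simp, by simp [h]⟩
  · refine ⟨C (v t), by simp, ?_⟩
    intro p hp
    have := Finset.card_le_one.mp hT p hp t ht
    subst this
    simp

lemma interp_key : ∀ (m r : ℕ) (T : Finset (Fin m → ZMod 2))
    (v : (Fin m → ZMod 2) → ZMod 2), T.card < 2 ^ (r + 1) →
    ∃ q : MvPolynomial (Fin m) (ZMod 2), q.totalDegree ≤ r ∧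
      ∀ p ∈ T, MvPolynomial.eval p q = v p := by
  intro m
  induction m with
  | zero =>
    intro r T v _
    refine interp_const T ?_ v
    calc T.card ≤ Fintype.card (Fin 0 → ZMod 2) := T.card_le_univ
      _ = 1 := by simp
  | succ m ih =>
    intro r T v hT
    rcases r with _ | s
    · refine interp_const T ?_ v
      norm_num at hT
      omega
    · -- choose the small slice value c
      have hZ : ∀ a c : ZMod 2, a ≠ c ↔ a = 1 + c := by decide
      obtain ⟨c, hc⟩ : ∃ c : ZMod 2, (T.filter fun p => p 0 = c).card < 2 ^ (s + 1) := by
        by_contra hcon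
        push_neg at hcon
        have h0 := hcon 0
        have h1 := hcon 1
        have hsum : (T.filter fun p => p 0 = 0).card
            + (T.filter fun p => ¬ p 0 = 0).card = T.card :=
          Finset.card_filter_add_card_filter_not _
        have heq : (T.filter fun p => ¬ p 0 = 0) = T.filter fun p => p 0 = 1 := by
          apply Finset.filter_congr
          intro x _
          simpa using hZ (x 0) 0
        rw [heq] at hsum
        have hpow : 2 ^ (s + 1 + 1) = 2 ^ (s + 1) + 2 ^ (s + 1) := by ring
        exact absurd hT (not_lt.mpr (by rw [← hsum, hpow]; exact Nat.add_le_add h0 h1))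
      set S : Finset (Fin (m+1) → ZMod 2) := T.filter fun p => p 0 = c with hS
      set L : Finset (Fin (m+1) → ZMod 2) := T.filter fun p => p 0 = 1 + c with hL
      -- interpolate on the large slice
      obtain ⟨A, hAdeg, hA⟩ := ih (s+1) (L.image Fin.tail)
        (fun t => v (Fin.cons (1 + c) t))
        (lt_of_le_of_lt (le_trans Finset.card_image_le (Finset.card_filter_le _ _)) hT)
      -- interpolate the correction on the small slice
      obtain ⟨B, hBdeg, hB⟩ := ih s (S.image Fin.tail)
        (fun t => v (Fin.cons c t) + MvPolynomial.eval t A)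
        (lt_of_le_of_lt Finset.card_image_le hc)
      refine ⟨rename Fin.succ A + (X 0 + C (1 + c)) * rename Fin.succ B, ?_, ?_⟩
      · refine le_trans (totalDegree_add _ _) (max_le ?_ ?_)
        · exact le_trans (totalDegree_rename_le _ _) hAdeg
        · refine le_trans (totalDegree_mul _ _) ?_
          have h1 : (X (0 : Fin (m+1)) + C (1 + c) :
              MvPolynomial (Fin (m+1)) (ZMod 2)).totalDegree ≤ 1 := by
            refine le_trans (totalDegree_add _ _) (max_le ?_ ?_)
            · exact le_of_eq (totalDegree_X _)
            · exact le_trans (le_of_eq (totalDegree_C _)) (by norm_num)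
          have h2 := le_trans (totalDegree_rename_le (Fin.succ) B) hBdeg
          omega
      · intro p hp
        have htail : p ∘ Fin.succ = Fin.tail p := rfl
        have hcons : Fin.cons (p 0) (Fin.tail p) = p := Fin.cons_self_tail p
        simp only [map_add, map_mul, eval_rename, eval_X, eval_C, htail]
        rcases eq_or_ne (p 0) c with h0 | h0
        · -- small slice: the factor is 1
          have hfac : p 0 + (1 + c) = 1 := by
            rw [h0]; exact (by decide : ∀ c : ZMod 2, c + (1 + c) = 1) c
          have hmem : Fin.tail p ∈ S.image Fin.tail :=
            Finset.mem_image_of_mem _ (Finset.mem_filter.mpr ⟨hp, h0⟩)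
          have hBp := hB _ hmem
          rw [hfac, one_mul, hBp, ← h0, hcons]
          exact (by decide : ∀ a b : ZMod 2, a + (b + a) = b) _ _
        · -- large slice: the factor is 0
          have h0' : p 0 = 1 + c := (hZ (p 0) c).mp h0
          have hfac : p 0 + (1 + c) = 0 := by
            rw [h0']; exact (by decide : ∀ c : ZMod 2, (1 + c) + (1 + c) = 0) c
          have hmem : Fin.tail p ∈ L.image Fin.tail :=
            Finset.mem_image_of_mem _ (Finset.mem_filter.mpr ⟨hp, h0'⟩)
          have hAp := hA _ hmem
          rw [hfac, zero_mul, add_zero, hAp, ← h0', hcons]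

/-- Any fewer than `2^(r+1)` positions can be filled arbitrarily by a codeword of
`RM(r,m)` (equivalently, any fewer than `2^(r+1)` columns of a generator matrix of
`RM(r,m)` are linearly independent). -/
theorem RM_covers_lt_dual_distance (r m : ℕ) (hr : r < m)
    (T : Finset (Fin m → ZMod 2)) (hT : T.card < 2 ^ (r + 1))
    (v : (Fin m → ZMod 2) → ZMod 2) :
    ∃ c ∈ RMCode r m, ∀ p ∈ T, c p = v p := by
  obtain ⟨q, hq, h⟩ := interp_key m r T v hT
  exact ⟨fun x => MvPolynomial.eval x q, ⟨q, hq, fun x => rfl⟩, h⟩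
end

section
/- Let 1 ≤ s ≤ m. The code space of the Reed–Muller code RM(s−1,m) can mask any 2^s − 1 stuck-at errors: for every set of 2^s − 1 distinct coordinate positions and every assignment of values in 𝔽₂ to these positions, there exists a codeword of RM(s−1,m) taking exactly these values at these positions. -/
open MvPolynomial Finset

namespace RMaux

def dot {m : ℕ} (a w : Fin m → ZMod 2) : ZMod 2 := ∑ i, a i * w i

lemma zmod2_ne (z : ZMod 2) (h : z ≠ 0) : z = 1 := by revert h; revert z; decide

lemma zmod2_add_self (z : ZMod 2) : z + z = 0 := by revert z; decide

lemma dot_add_left {m : ℕ} (a b w : Fin m → ZMod 2) : dot (a + b) w = dot a w + dot b w := by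
  simp [dot, add_mul, Finset.sum_add_distrib]

/-- cardinality of the kernel halfspace -/
lemma card_dot_zero {m : ℕ} (w : Fin m → ZMod 2) (hw : w ≠ 0) :
    (univ.filter (fun a : Fin m → ZMod 2 => dot a w = 0)).card = 2 ^ (m - 1) := by
  obtain ⟨i, hi⟩ := Function.ne_iff.mp hw
  have hwi : w i = 1 := zmod2_ne _ hi
  set a₀ : Fin m → ZMod 2 := Pi.single i 1 with ha₀
  have hd0 : dot a₀ w = 1 := by
    simp [dot, ha₀]
    rw [Finset.sum_eq_single i]
    · simp [hwi]
    · intro b _ hb; simp [Pi.single_apply, hb]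
    · simp
  have key : (univ.filter (fun a : Fin m → ZMod 2 => dot a w = 0)).card =
      (univ.filter (fun a : Fin m → ZMod 2 => ¬ dot a w = 0)).card := by
    apply Finset.card_bij' (fun a _ => a + a₀) (fun a _ => a + a₀)
    · intro a ha
      simp only [mem_filter, mem_univ, true_and] at ha ⊢
      rw [dot_add_left, ha, hd0]
      simp
    · intro a ha
      simp only [mem_filter, mem_univ, true_and] at ha ⊢
      rw [dot_add_left, hd0]
      have := zmod2_ne _ ha
      rw [this]; simp [zmod2_add_self]
    · intro a _; funext j; simp [zmod2_add_self, add_assoc]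
    · intro a _; funext j; simp [zmod2_add_self, add_assoc]
  have total := Finset.card_filter_add_card_filter_not
    (s := (univ : Finset (Fin m → ZMod 2))) (fun a => dot a w = 0)
  have hcard : (univ : Finset (Fin m → ZMod 2)).card = 2 ^ m := by
    simp [Finset.card_univ]
  have hm : 1 ≤ m := i.pos
  have : 2 ^ m = 2 ^ (m - 1) * 2 := by
    rw [← pow_succ]; congr 1; omega
  omega


lemma exists_good_a {m : ℕ} {d : ℕ} (p : Fin m → ZMod 2) (S : Finset (Fin m → ZMod 2))
    (hp : p ∉ S) (hne : S.Nonempty) (hcard : S.card ≤ 2 ^ (d + 2) - 2) :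
    ∃ a : Fin m → ZMod 2, a ≠ 0 ∧
      (S.filter (fun q => dot a (q - p) = 0)).card ≤ 2 ^ (d + 1) - 2 := by
  by_contra hcon
  push_neg at hcon
  have hlb : ∀ a : Fin m → ZMod 2, a ≠ 0 →
      2 ^ (d + 1) - 1 ≤ (S.filter (fun q => dot a (q - p) = 0)).card := by
    intro a ha
    have := hcon a ha
    omega
  -- double counting
  have hsum : ∑ a : Fin m → ZMod 2, (S.filter (fun q => dot a (q - p) = 0)).card
      = S.card * 2 ^ (m - 1) := by
    have h1 : ∀ a : Fin m → ZMod 2, (S.filter (fun q => dot a (q - p) = 0)).card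
        = ∑ q ∈ S, if dot a (q - p) = 0 then 1 else 0 := fun a =>
      Finset.card_filter _ _
    simp only [h1]
    rw [Finset.sum_comm]
    rw [Finset.sum_congr rfl (fun q hq => ?_)]
    · rw [Finset.sum_const, smul_eq_mul, mul_comm]
    · have hqp : q - p ≠ 0 := by
        intro h
        apply hp
        have hqe : q = p := by funext j; have := congrFun h j; simpa [sub_eq_zero] using this
        exact hqe ▸ hq
      rw [← Finset.card_filter]
      exact card_dot_zero _ hqp
  -- lower bound the sum
  obtain ⟨q₀, hq₀⟩ := hne
  have hqp : q₀ - p ≠ 0 := by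
    intro h
    apply hp
    have : q₀ = p := by funext j; have := congrFun h j; simpa [sub_eq_zero] using this
    exact this ▸ hq₀
  have hm : 1 ≤ m := by
    obtain ⟨i, _⟩ := Function.ne_iff.mp hqp
    exact i.pos
  have h0mem : (0 : Fin m → ZMod 2) ∈ (univ : Finset (Fin m → ZMod 2)) := mem_univ _
  have h0 : (S.filter (fun q => dot (0 : Fin m → ZMod 2) (q - p) = 0)).card = S.card := by
    rw [Finset.filter_true_of_mem]
    intro q _
    simp [dot]
  have hsplit : ∑ a : Fin m → ZMod 2, (S.filter (fun q => dot a (q - p) = 0)).card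
      = S.card + ∑ a ∈ (univ : Finset (Fin m → ZMod 2)).erase 0,
        (S.filter (fun q => dot a (q - p) = 0)).card := by
    have := (Finset.add_sum_erase univ
      (fun a => (S.filter (fun q => dot a (q - p) = 0)).card) h0mem).symm
    simpa [h0] using this
  have herasecard : ((univ : Finset (Fin m → ZMod 2)).erase 0).card = 2 ^ m - 1 := by
    rw [Finset.card_erase_of_mem h0mem, Finset.card_univ]
    simp
  have hlow : ((univ : Finset (Fin m → ZMod 2)).erase 0).card • (2 ^ (d + 1) - 1) ≤
      ∑ a ∈ (univ : Finset (Fin m → ZMod 2)).erase 0,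
        (S.filter (fun q => dot a (q - p) = 0)).card := by
    apply Finset.card_nsmul_le_sum
    intro a ha
    exact hlb a (Finset.ne_of_mem_erase ha)
  rw [herasecard, smul_eq_mul] at hlow
  -- put it together
  have hkey : S.card + (2 ^ m - 1) * (2 ^ (d + 1) - 1) ≤ S.card * 2 ^ (m - 1) := by
    rw [← hsum, hsplit]
    exact Nat.add_le_add_left hlow _
  -- arithmetic contradiction
  have hScard : 1 ≤ S.card := Finset.card_pos.mpr ⟨q₀, hq₀⟩
  have hp2m : 2 ^ m = 2 ^ (m - 1) * 2 := by rw [← pow_succ]; congr 1; omega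
  set A := 2 ^ (m - 1) with hA
  set B := 2 ^ (d + 1) with hB
  have hA1 : 1 ≤ A := Nat.one_le_two_pow
  have hB2 : 2 ≤ B := by
    have : 2 ^ 1 ≤ 2 ^ (d + 1) := Nat.pow_le_pow_right (by norm_num) (by omega)
    simpa using this
  have hc2 : S.card ≤ 2 * B - 2 := by
    have : 2 ^ (d + 2) = 2 * B := by rw [hB]; ring
    omega
  rw [hp2m] at hkey
  set c := S.card with hc
  zify [hA1, hB2, hScard, show (1:ℕ) ≤ B by omega,
    show (1:ℕ) ≤ A*2 by omega, show (2:ℕ) ≤ 2*B by omega] at hkey hc2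
  have hA1' : (1:ℤ) ≤ (A:ℤ) := by exact_mod_cast hA1
  have hB2' : (2:ℤ) ≤ (B:ℤ) := by exact_mod_cast hB2
  have h1 : ((c:ℤ)) * ((A:ℤ) - 1) ≤ (2*(B:ℤ) - 2) * ((A:ℤ) - 1) :=
    mul_le_mul_of_nonneg_right hc2 (by linarith)
  nlinarith [h1, hkey, hA1', hB2']


/-- affine form `1 + a · (x - p)` as a polynomial -/
noncomputable def aff {m : ℕ} (a p : Fin m → ZMod 2) : MvPolynomial (Fin m) (ZMod 2) :=
  1 + ∑ i, C (a i) * (X i - C (p i))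

lemma aff_totalDegree {m : ℕ} (a p : Fin m → ZMod 2) : (aff a p).totalDegree ≤ 1 := by
  unfold aff
  apply le_trans (totalDegree_add _ _)
  apply max_le
  · simp [totalDegree_one]
  · apply le_trans (totalDegree_finset_sum _ _)
    apply Finset.sup_le
    intro i _
    apply le_trans (totalDegree_mul _ _)
    have h1 : (C (a i) : MvPolynomial (Fin m) (ZMod 2)).totalDegree = 0 := totalDegree_C _
    have h2 : ((X i - C (p i)) : MvPolynomial (Fin m) (ZMod 2)).totalDegree ≤ 1 := by
      apply le_trans (totalDegree_sub_C_le _ _)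
      simp [totalDegree_X]
    omega

lemma aff_eval {m : ℕ} (a p x : Fin m → ZMod 2) :
    eval x (aff a p) = 1 + dot a (x - p) := by
  simp [aff, dot, eval_sum]

lemma indicator_exists (d : ℕ) : ∀ (m : ℕ) (p : Fin m → ZMod 2)
    (S : Finset (Fin m → ZMod 2)), p ∉ S → S.card ≤ 2 ^ (d + 1) - 2 →
    ∃ f : MvPolynomial (Fin m) (ZMod 2), f.totalDegree ≤ d ∧
      eval p f = 1 ∧ ∀ q ∈ S, eval q f = 0 := by
  induction d with
  | zero =>
    intro m p S hp hcard
    have : S = ∅ := Finset.card_eq_zero.mp (by omega)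
    subst this
    exact ⟨1, by simp, by simp, by simp⟩
  | succ d ih =>
    intro m p S hp hcard
    rcases S.eq_empty_or_nonempty with hS | hS
    · subst hS
      exact ⟨1, by simp, by simp, by simp⟩
    · obtain ⟨a, ha0, hacard⟩ := exists_good_a p S hp hS (by
        have h : d + 1 + 1 = d + 2 := rfl
        rw [← h]
        exact hcard)
      set S' := S.filter (fun q => dot a (q - p) = 0) with hS'
      have hpS' : p ∉ S' := fun h => hp (Finset.mem_of_mem_filter _ h)
      obtain ⟨g, hgdeg, hgp, hgS⟩ := ih m p S' hpS' hacard
      refine ⟨aff a p * g, ?_, ?_, ?_⟩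
      · apply le_trans (totalDegree_mul _ _)
        have := aff_totalDegree a p
        omega
      · rw [eval_mul, aff_eval, hgp]
        simp [dot]
      · intro q hq
        rw [eval_mul, aff_eval]
        by_cases hdq : dot a (q - p) = 0
        · rw [hgS q (Finset.mem_filter.mpr ⟨hq, hdq⟩)]
          simp
        · rw [zmod2_ne _ hdq]
          norm_num
          left
          decide

end RMaux

open RMaux

/-- The code space of `RM(s-1,m)` can mask any `2^s - 1` stuck-at errors. -/
theorem RM_masks_stuck_at (s m : ℕ) (hs : 1 ≤ s) (hsm : s ≤ m)
    (T : Finset (Fin m → ZMod 2)) (hT : T.card = 2 ^ s - 1)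
    (v : (Fin m → ZMod 2) → ZMod 2) :
    ∃ c ∈ RMCode (s - 1) m, ∀ p ∈ T, c p = v p := by
  have key : ∀ p ∈ T, ∃ f : MvPolynomial (Fin m) (ZMod 2), f.totalDegree ≤ s - 1 ∧
      eval p f = 1 ∧ ∀ q ∈ T.erase p, eval q f = 0 := by
    intro p hp
    apply RMaux.indicator_exists (s - 1) m p (T.erase p) (Finset.notMem_erase _ _)
    rw [Finset.card_erase_of_mem hp, hT]
    have h1 : s - 1 + 1 = s := by omega
    rw [h1]
    omega
  choose F hdeg h1 h0 using key
  set q : MvPolynomial (Fin m) (ZMod 2) := ∑ p ∈ T.attach, C (v p.1) * F p.1 p.2 with hq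
  refine ⟨fun x => eval x q, ⟨q, ?_, fun x => rfl⟩, ?_⟩
  · apply le_trans (totalDegree_finset_sum _ _)
    apply Finset.sup_le
    intro p _
    apply le_trans (totalDegree_mul _ _)
    have hd := hdeg p.1 p.2
    have hc : (C (v p.1) : MvPolynomial (Fin m) (ZMod 2)).totalDegree = 0 := totalDegree_C _
    omega
  · intro p hp
    show eval p q = v p
    rw [hq, map_sum]
    rw [Finset.sum_eq_single (⟨p, hp⟩ : {x // x ∈ T})]
    · rw [eval_mul, eval_C, h1 p hp, mul_one]
    · intro b _ hb
      have hpe : p ∈ T.erase b.1 :=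
        Finset.mem_erase.mpr ⟨fun h => hb (Subtype.ext h.symm), hp⟩
      rw [eval_mul, h0 b.1 b.2 p hpe, mul_zero]
    · intro h
      exact absurd (Finset.mem_attach _ _) h
end
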